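/- arXiv:2302.11731 — 2 statements merged into one kernel-verified Lean document; each statement's English description precedes it below -/
import Mathlib

section
/- Let n ≥ 2 and σ ∈ ℝⁿ with σ₁ > 0 and √3·σ₁ > √(σ₂² + ⋯ + σₙ²). With M the matrix with M₁₁ = 3σ₁, M₁ⱼ = Mⱼ₁ = σⱼ (j ≥ 2), Mⱼⱼ = σ₁ (j ≥ 2), zero otherwise, there exist constants 0 < c₁ ≤ c₂ such that c₁|x|² ≤ xᵀMx ≤ c₂|x|² for all x ∈ ℝⁿ. -/
/-!
Write `a = σ₁`, `y = x₁`, `P = ∑_{j≥2} σⱼxⱼ`, `t = ∑_{j≥2} xⱼ²` and `s = ∑_{j≥2} σⱼ²`. Then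
`xᵀMx = 3a y² + 2yP + a t`, Cauchy–Schwarz gives `P² ≤ s t`, and the hypothesis reads `s < 3a²`.
Completing the square in `y` yields the lower bound with `c₁ = (3a² - s) / (4a)`, and
`2ayP ≤ a²y² + P²` the upper bound with `c₂ = 4a + s / a`.
-/

open Matrix

section
variable {ι : Type*} [Fintype ι] [DecidableEq ι]

def zkMatrix (e : ι) (σ : ι → ℝ) : Matrix ι ι ℝ := fun i j =>
  if i = e ∧ j = e then 3 * σ e
  else if i = e then σ j
  else if j = e then σ i
  else if i = j then σ e
  else 0

lemma zkMatrix_mulVec_self (e : ι) (σ x : ι → ℝ) :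
    (zkMatrix e σ *ᵥ x) e = 3 * σ e * x e + ∑ j ∈ Finset.univ.erase e, σ j * x j := by
  rw [mulVec, dotProduct, ← Finset.add_sum_erase _ _ (Finset.mem_univ e)]
  congr 1
  · simp [zkMatrix]
  · refine Finset.sum_congr rfl fun j hj => ?_
    simp [zkMatrix, Finset.ne_of_mem_erase hj]

lemma zkMatrix_mulVec_of_ne (e : ι) (σ x : ι → ℝ) {i : ι} (hi : i ≠ e) :
    (zkMatrix e σ *ᵥ x) i = σ i * x e + σ e * x i := by
  rw [mulVec, dotProduct, ← Finset.add_sum_erase _ _ (Finset.mem_univ e),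
    Finset.sum_eq_single_of_mem i (Finset.mem_erase.2 ⟨hi, Finset.mem_univ i⟩)]
  · simp [zkMatrix, hi]
  · intro j hj hji
    simp [zkMatrix, hi, Finset.ne_of_mem_erase hj, Ne.symm hji]

lemma dotProduct_zkMatrix_mulVec (e : ι) (σ x : ι → ℝ) :
    x ⬝ᵥ zkMatrix e σ *ᵥ x = 3 * σ e * x e ^ 2 + 2 * x e * ∑ j ∈ Finset.univ.erase e, σ j * x j
      + σ e * ∑ j ∈ Finset.univ.erase e, x j ^ 2 := by
  have hrest : ∑ j ∈ Finset.univ.erase e, x j * (zkMatrix e σ *ᵥ x) j =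
      x e * ∑ j ∈ Finset.univ.erase e, σ j * x j + σ e * ∑ j ∈ Finset.univ.erase e, x j ^ 2 := by
    rw [Finset.mul_sum, Finset.mul_sum, ← Finset.sum_add_distrib]
    refine Finset.sum_congr rfl fun j hj => ?_
    rw [zkMatrix_mulVec_of_ne e σ x (Finset.ne_of_mem_erase hj)]
    ring
  rw [dotProduct, ← Finset.add_sum_erase _ _ (Finset.mem_univ e), zkMatrix_mulVec_self, hrest]
  ring

lemma zk_form_lower_bound {a s y P t : ℝ} (ha : 0 < a) (hs₀ : 0 ≤ s) (hs : s < 3 * a ^ 2)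
    (ht : 0 ≤ t) (hP : P ^ 2 ≤ s * t) :
    (3 * a ^ 2 - s) / (4 * a) * (y ^ 2 + t) ≤ 3 * a * y ^ 2 + 2 * y * P + a * t := by
  set c := (3 * a ^ 2 - s) / (4 * a) with hc
  have hc4 : c * (4 * a) = 3 * a ^ 2 - s := div_mul_cancel₀ _ (by positivity)
  have hca : c < a := by rw [hc, div_lt_iff₀ (by positivity)]; nlinarith
  -- `(3a - c)(a - c) = s + c²`, so the form minus `c (y² + t)` is a sum of squares.
  have hdisc : s * t ≤ (3 * a - c) * (a - c) * t := by nlinarith [sq_nonneg c]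
  nlinarith [sq_nonneg ((3 * a - c) * y + P)]

lemma zk_form_upper_bound {a s y P t : ℝ} (ha : 0 < a) (hs : 0 ≤ s) (ht : 0 ≤ t)
    (hP : P ^ 2 ≤ s * t) :
    3 * a * y ^ 2 + 2 * y * P + a * t ≤ (4 * a + s / a) * (y ^ 2 + t) := by
  refine le_of_mul_le_mul_left ?_ ha
  have hscaled : a * ((4 * a + s / a) * (y ^ 2 + t)) = (4 * a ^ 2 + s) * (y ^ 2 + t) := by
    field_simp
  rw [hscaled]
  nlinarith [sq_nonneg (a * y - P), mul_nonneg hs (sq_nonneg y), mul_nonneg (sq_nonneg a) ht]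

theorem exists_bounds_dotProduct_zkMatrix_mulVec (e : ι) (σ : ι → ℝ) (ha : 0 < σ e)
    (hs : ∑ j ∈ Finset.univ.erase e, σ j ^ 2 < 3 * σ e ^ 2) :
    ∃ c₁ c₂ : ℝ, 0 < c₁ ∧ c₁ ≤ c₂ ∧ ∀ x : ι → ℝ,
      c₁ * ∑ i, x i ^ 2 ≤ x ⬝ᵥ zkMatrix e σ *ᵥ x ∧
      x ⬝ᵥ zkMatrix e σ *ᵥ x ≤ c₂ * ∑ i, x i ^ 2 := by
  set s := ∑ j ∈ Finset.univ.erase e, σ j ^ 2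
  have hs₀ : 0 ≤ s := Finset.sum_nonneg fun j _ => sq_nonneg (σ j)
  refine ⟨(3 * σ e ^ 2 - s) / (4 * σ e), 4 * σ e + s / σ e,
    div_pos (by linarith) (by positivity), ?_, fun x => ?_⟩
  · -- both bounds at `y = 1`, `t = 0`
    simpa using (zk_form_lower_bound (y := 1) ha hs₀ hs le_rfl (P := 0) (by simp)).trans
      (zk_form_upper_bound ha hs₀ le_rfl (by simp))
  have ht : 0 ≤ ∑ j ∈ Finset.univ.erase e, x j ^ 2 := Finset.sum_nonneg fun j _ => sq_nonneg (x j)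
  have hCS := Finset.sum_mul_sq_le_sq_mul_sq (Finset.univ.erase e) σ x
  rw [dotProduct_zkMatrix_mulVec, ← Finset.add_sum_erase _ _ (Finset.mem_univ e)]
  exact ⟨zk_form_lower_bound ha hs₀ hs ht hCS, zk_form_upper_bound ha hs₀ ht hCS⟩

end

/-- The quadratic form `xᵀ M x` associated to the ZK energy-estimate matrix `M` is
equivalent to `|x|²`: there are `0 < c₁ ≤ c₂` with `c₁|x|² ≤ xᵀMx ≤ c₂|x|²`. -/
theorem stmt_1 (n : ℕ) (hn : 2 ≤ n) (σ : Fin n → ℝ)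
    (hσ1 : 0 < σ ⟨0, by omega⟩)
    (hσ : Real.sqrt 3 * σ ⟨0, by omega⟩ >
      Real.sqrt (∑ j ∈ Finset.univ.filter (fun j : Fin n => j ≠ ⟨0, by omega⟩), σ j ^ 2))
    (M : Matrix (Fin n) (Fin n) ℝ)
    (hM : ∀ i j : Fin n,
      M i j =
        if i = ⟨0, by omega⟩ ∧ j = ⟨0, by omega⟩ then 3 * σ ⟨0, by omega⟩
        else if i = ⟨0, by omega⟩ then σ j
        else if j = ⟨0, by omega⟩ then σ i
        else if i = j then σ ⟨0, by omega⟩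
        else 0) :
    ∃ c₁ c₂ : ℝ, 0 < c₁ ∧ c₁ ≤ c₂ ∧
      ∀ x : Fin n → ℝ,
        c₁ * (∑ i, x i ^ 2) ≤ x ⬝ᵥ M.mulVec x ∧
        x ⬝ᵥ M.mulVec x ≤ c₂ * (∑ i, x i ^ 2) := by
  obtain rfl : M = zkMatrix ⟨0, by omega⟩ σ := Matrix.ext hM
  rw [gt_iff_lt, Finset.filter_ne', Real.sqrt_lt' (by positivity), mul_pow,
    Real.sq_sqrt zero_le_three] at hσ
  exact exists_bounds_dotProduct_zkMatrix_mulVec _ σ hσ1 hσ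
end

section
/- For b > 0, η > 0, with p_η(x) = e^{2bx}(1 + ηe^{2bx})^{-1} and ρ_η(x) = e^{bx}(1 + ηe^{2bx})^{-1}, one has |p_η''(x)| ≤ 4b²·ρ_η(x)² for all x ∈ ℝ. -/
/-!
Writing `u = e^{2bx}`, two applications of the quotient rule give
`p_η'' = 4b² u (1 - ηu) / (1 + ηu)³`, while `ρ_η² = u / (1 + ηu)²`; for `η ≥ 0` the claim is
therefore just `|1 - ηu| ≤ 1 + ηu`.
-/

open Real

section LogisticExp

variable {η : ℝ} (hη : 0 ≤ η) (c : ℝ)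

theorem hasDerivAt_exp_const_mul (y : ℝ) :
    HasDerivAt (fun z => exp (c * z)) (c * exp (c * y)) y := by
  simpa [mul_comm] using ((hasDerivAt_id y).const_mul c).exp

include hη in
theorem hasDerivAt_exp_div_one_add_mul_exp (y : ℝ) :
    HasDerivAt (fun z => exp (c * z) / (1 + η * exp (c * z)))
      (c * exp (c * y) / (1 + η * exp (c * y)) ^ 2) y := by
  have hden : 0 < 1 + η * exp (c * y) := by positivity
  refine ((hasDerivAt_exp_const_mul c y).div
    (((hasDerivAt_exp_const_mul c y).const_mul η).const_add 1) hden.ne').congr_deriv ?_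
  ring

include hη in
theorem deriv_exp_div_one_add_mul_exp :
    deriv (fun z => exp (c * z) / (1 + η * exp (c * z))) =
      fun y => c * exp (c * y) / (1 + η * exp (c * y)) ^ 2 :=
  funext fun y => (hasDerivAt_exp_div_one_add_mul_exp hη c y).deriv

include hη in
theorem hasDerivAt_mul_exp_div_one_add_mul_exp_sq (y : ℝ) :
    HasDerivAt (fun z => c * exp (c * z) / (1 + η * exp (c * z)) ^ 2)
      (c ^ 2 * exp (c * y) * (1 - η * exp (c * y)) / (1 + η * exp (c * y)) ^ 3) y := by
  have hden : 0 < 1 + η * exp (c * y) := by positivity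
  refine (((hasDerivAt_exp_const_mul c y).const_mul c).div
    ((((hasDerivAt_exp_const_mul c y).const_mul η).const_add 1).pow 2)
    (pow_ne_zero 2 hden.ne')).congr_deriv ?_
  simp only [Pi.pow_apply]
  field_simp
  ring

include hη in
theorem deriv_deriv_exp_div_one_add_mul_exp (y : ℝ) :
    deriv (deriv (fun z => exp (c * z) / (1 + η * exp (c * z)))) y =
      c ^ 2 * exp (c * y) * (1 - η * exp (c * y)) / (1 + η * exp (c * y)) ^ 3 := by
  rw [deriv_exp_div_one_add_mul_exp hη c,
    (hasDerivAt_mul_exp_div_one_add_mul_exp_sq hη c y).deriv]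

end LogisticExp

theorem abs_mul_one_sub_div_le {η u : ℝ} (hη : 0 ≤ η) (hu : 0 ≤ u) :
    |u * (1 - η * u) / (1 + η * u) ^ 3| ≤ u / (1 + η * u) ^ 2 := by
  have hden : 0 < 1 + η * u := by positivity
  have hnum : |1 - η * u| ≤ 1 + η * u := abs_le.2 ⟨by nlinarith, by nlinarith⟩
  calc |u * (1 - η * u) / (1 + η * u) ^ 3|
      = u * |1 - η * u| / (1 + η * u) ^ 3 := by
        rw [abs_div, abs_mul, abs_of_nonneg hu, abs_of_pos (pow_pos hden 3)]
    _ ≤ u * (1 + η * u) / (1 + η * u) ^ 3 := by gcongr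
    _ = u / (1 + η * u) ^ 2 := by field_simp

theorem stmt_4_general (b η : ℝ) (hη : 0 < η) (x : ℝ) :
    |deriv (deriv (fun y => Real.exp (2 * b * y) / (1 + η * Real.exp (2 * b * y)))) x| ≤
      4 * b ^ 2 * (Real.exp (b * x) / (1 + η * Real.exp (2 * b * x))) ^ 2 := by
  have hsq : exp (b * x) ^ 2 = exp (2 * b * x) := by
    rw [← exp_nat_mul]; ring_nf
  set u := exp (2 * b * x)
  calc |deriv (deriv (fun y => exp (2 * b * y) / (1 + η * exp (2 * b * y)))) x|
      = (2 * b) ^ 2 * |u * (1 - η * u) / (1 + η * u) ^ 3| := by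
        rw [deriv_deriv_exp_div_one_add_mul_exp hη.le, mul_assoc, mul_div_assoc, abs_mul,
          abs_of_nonneg (sq_nonneg _)]
    _ ≤ (2 * b) ^ 2 * (u / (1 + η * u) ^ 2) :=
        mul_le_mul_of_nonneg_left (abs_mul_one_sub_div_le hη.le (exp_pos _).le) (sq_nonneg _)
    _ = 4 * b ^ 2 * (exp (b * x) / (1 + η * u)) ^ 2 := by rw [div_pow, hsq]; ring

/-- For `p_η(x) = e^{2bx}(1 + ηe^{2bx})⁻¹` and `ρ_η(x) = e^{bx}(1 + ηe^{2bx})⁻¹`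
one has `|p_η''(x)| ≤ 4b² ρ_η(x)²`. -/
theorem stmt_4 (b η : ℝ) (hb : 0 < b) (hη : 0 < η) (x : ℝ) :
    |deriv (deriv (fun y => Real.exp (2 * b * y) / (1 + η * Real.exp (2 * b * y)))) x| ≤
      4 * b ^ 2 * (Real.exp (b * x) / (1 + η * Real.exp (2 * b * x))) ^ 2 :=
  stmt_4_general b η hη x
end
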